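/- Let n, m be positive integers. Let W := { (R^T L_m^{(1)} + Λ_n(0) S, R^T L_m^{(2)} + Δ_n S) : S ∈ ℂ^{n×(2m+1)}, R ∈ ℂ^{(2m+1)×n} } ⊆ ℂ^{n×(2m+1)} × ℂ^{n×(2m+1)}, and let P := { (X, 0) : X ∈ ℂ^{n×(2m+1)}, X_{ij} = 0 unless j = m+1 }. Then ℂ^{n×(2m+1)} × ℂ^{n×(2m+1)} = W ⊕ P. -/

import Mathlib

open Matrix

noncomputable section

/-- `Λ_n(λ)`: the `n × n` matrix with `(i,j)` entry `λ` if `i + j = n + 1`, `1` if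
`i + j = n + 2`, and `0` otherwise (1-based indices). -/
def lamM (n : ℕ) (lam : ℂ) : Matrix (Fin n) (Fin n) ℂ :=
  Matrix.of fun i j =>
    if (i : ℕ) + 1 + ((j : ℕ) + 1) = n + 1 then lam
    else if (i : ℕ) + 1 + ((j : ℕ) + 1) = n + 2 then 1 else 0

/-- `Δ_n`: the `n × n` matrix with `(i,j)` entry `1` if `i + j = n + 1` and `0`
otherwise (1-based indices). -/
def delM (n : ℕ) : Matrix (Fin n) (Fin n) ℂ :=
  Matrix.of fun i j => if (i : ℕ) + 1 + ((j : ℕ) + 1) = n + 1 then 1 else 0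

/-- `F_n`: the `n × (n+1)` matrix with `F_n(i,j) = 1` exactly when `j = i`. -/
def FM (n : ℕ) : Matrix (Fin n) (Fin (n + 1)) ℂ :=
  Matrix.of fun i j => if (j : ℕ) = (i : ℕ) then 1 else 0

/-- `G_n`: the `n × (n+1)` matrix with `G_n(i,j) = 1` exactly when `j = i + 1`. -/
def GM (n : ℕ) : Matrix (Fin n) (Fin (n + 1)) ℂ :=
  Matrix.of fun i j => if (j : ℕ) = (i : ℕ) + 1 then 1 else 0

/-- `L_n^{(1)} = [[0, F_nᵀ], [F_n, 0]]`, a symmetric `(2n+1) × (2n+1)` matrix. -/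
def L1M (n : ℕ) : Matrix (Fin (2 * n + 1)) (Fin (2 * n + 1)) ℂ :=
  Matrix.reindex (finSumFinEquiv.trans (finCongr (by omega)))
    (finSumFinEquiv.trans (finCongr (by omega)))
    (Matrix.fromBlocks 0 (FM n)ᵀ (FM n) 0)

/-- `L_n^{(2)} = [[0, G_nᵀ], [G_n, 0]]`, a symmetric `(2n+1) × (2n+1)` matrix. -/
def L2M (n : ℕ) : Matrix (Fin (2 * n + 1)) (Fin (2 * n + 1)) ℂ :=
  Matrix.reindex (finSumFinEquiv.trans (finCongr (by omega)))
    (finSumFinEquiv.trans (finCongr (by omega)))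
    (Matrix.fromBlocks 0 (GM n)ᵀ (GM n) 0)

theorem lamM_isSymm (n : ℕ) (lam : ℂ) : (lamM n lam).IsSymm := by
  unfold Matrix.IsSymm lamM
  ext i j
  simp only [Matrix.transpose_apply, Matrix.of_apply]
  split_ifs <;> first | rfl | omega

theorem delM_isSymm (n : ℕ) : (delM n).IsSymm := by
  unfold Matrix.IsSymm delM
  ext i j
  simp only [Matrix.transpose_apply, Matrix.of_apply]
  split_ifs <;> first | rfl | omega

theorem L1M_isSymm (n : ℕ) : (L1M n).IsSymm := by
  unfold Matrix.IsSymm L1M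
  rw [Matrix.transpose_reindex, Matrix.fromBlocks_transpose]
  simp

theorem L2M_isSymm (n : ℕ) : (L2M n).IsSymm := by
  unfold Matrix.IsSymm L2M
  rw [Matrix.transpose_reindex, Matrix.fromBlocks_transpose]
  simp

/-- The type of canonical summands: `H_k(λ)`, `K_k`, `L_k`. -/
inductive CanType where
  | H : ℕ → ℂ → CanType
  | K : ℕ → CanType
  | L : ℕ → CanType

/-- The size of a canonical pair. -/
def CanType.size : CanType → ℕ
  | .H k _ => k
  | .K k => k
  | .L k => 2 * k + 1

/-- The size parameter of a canonical pair. -/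
def CanType.param : CanType → ℕ
  | .H k _ => k
  | .K k => k
  | .L k => k

/-- The first matrix of a canonical pair. -/
def CanType.A : (c : CanType) → Matrix (Fin c.size) (Fin c.size) ℂ
  | .H k _ => delM k
  | .K k => lamM k 0
  | .L k => L1M k

/-- The second matrix of a canonical pair. -/
def CanType.B : (c : CanType) → Matrix (Fin c.size) (Fin c.size) ℂ
  | .H k lam => lamM k lam
  | .K k => delM k
  | .L k => L2M k

/-- Congruence of pairs of square complex matrices (over possibly different index
types): `(A', B') = (Sᵀ A S, Sᵀ B S)` for some invertible `S`. -/
def CongruentPairs {ι κ : Type} [Fintype ι] [Fintype κ] [DecidableEq ι] [DecidableEq κ]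
    (p : Matrix ι ι ℂ × Matrix ι ι ℂ) (q : Matrix κ κ ℂ × Matrix κ κ ℂ) : Prop :=
  ∃ S : Matrix ι κ ℂ, (∃ T : Matrix κ ι ℂ, S * T = 1 ∧ T * S = 1) ∧
    q.1 = Sᵀ * p.1 * S ∧ q.2 = Sᵀ * p.2 * S

/-- The linear map `(S, R) ↦ (Rᵀ A_j + A_i S, Rᵀ B_j + B_i S)`. -/
def offMap {ι κ : Type} [Fintype ι] [Fintype κ] (Ai Bi : Matrix ι ι ℂ)
    (Aj Bj : Matrix κ κ ℂ) :
    (Matrix ι κ ℂ × Matrix κ ι ℂ) →ₗ[ℂ] (Matrix ι κ ℂ × Matrix ι κ ℂ) where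
  toFun SR := (SR.2ᵀ * Aj + Ai * SR.1, SR.2ᵀ * Bj + Bi * SR.1)
  map_add' x y := by
    simp only [Prod.fst_add, Prod.snd_add, Matrix.transpose_add, Matrix.add_mul,
      Matrix.mul_add, Prod.mk_add_mk, Prod.ext_iff]
    constructor <;> abel
  map_smul' c x := by
    simp only [Prod.smul_fst, Prod.smul_snd, Matrix.transpose_smul, Matrix.smul_mul,
      Matrix.mul_smul, RingHom.id_apply, Prod.smul_mk, smul_add]

/-- `W = {(Rᵀ A_j + A_i S, Rᵀ B_j + B_i S) : S, R}`. -/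
def WSpace {ι κ : Type} [Fintype ι] [Fintype κ] (Ai Bi : Matrix ι ι ℂ)
    (Aj Bj : Matrix κ κ ℂ) : Submodule ℂ (Matrix ι κ ℂ × Matrix ι κ ℂ) :=
  LinearMap.range (offMap Ai Bi Aj Bj)

/-- The space of pairs of (rectangular) matrices supported on given sets of positions. -/
def entryPattern {ι κ : Type} (S1 S2 : Set (ι × κ)) :
    Submodule ℂ (Matrix ι κ ℂ × Matrix ι κ ℂ) where
  carrier := {x | (∀ i j, (i, j) ∉ S1 → x.1 i j = 0) ∧ (∀ i j, (i, j) ∉ S2 → x.2 i j = 0)}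
  add_mem' := by
    rintro a b ⟨ha1, ha2⟩ ⟨hb1, hb2⟩
    exact ⟨fun i j h => by show a.1 i j + b.1 i j = 0; rw [ha1 i j h, hb1 i j h, add_zero],
      fun i j h => by show a.2 i j + b.2 i j = 0; rw [ha2 i j h, hb2 i j h, add_zero]⟩
  zero_mem' := ⟨fun _ _ _ => rfl, fun _ _ _ => rfl⟩
  smul_mem' := by
    rintro c a ⟨ha1, ha2⟩
    exact ⟨fun i j h => by show c * a.1 i j = 0; rw [ha1 i j h, mul_zero],
      fun i j h => by show c * a.2 i j = 0; rw [ha2 i j h, mul_zero]⟩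


end

/-!
Since `Δ_n² = 1`, putting `S = Δ_n (Y - Rᵀ L_m^{(2)})` shows that `(X, Y) ∈ W` iff
`X = T L_m^{(1)} + N (Y - T L_m^{(2)})` for some `T`, where `N = Λ_n(0) Δ_n` is the nilpotent
down-shift. Everything thus reduces to `φ T = T L_m^{(1)} - N T L_m^{(2)}` modulo the middle
column. Right multiplication by `L_m^{(1)}` twice is the identity off the middle column, so there
`φ T = Z` is equivalent to `T - N T (L_m^{(2)} L_m^{(1)}) = Z L_m^{(1)}`, which is solvable because
`T ↦ T - N T M` is injective (a fixed point of `T ↦ N T M` vanishes row by row). If `φ T`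
vanishes off the middle column, the same row-by-row descent kills the last `m` columns of `T`,
since `L_m^{(2)} L_m^{(1)}` does not carry the first `m + 1` columns into them; the middle column
of `φ T` only sees the last column of `T`, so `φ T = 0`.
-/

def shiftDown (R : Type*) [Zero R] [One R] (n : ℕ) : Matrix (Fin n) (Fin n) R :=
  Matrix.of fun i k => if (i : ℕ) = k + 1 then 1 else 0

section shiftDown

variable {R κ : Type*} [Semiring R] {n : ℕ}

lemma shiftDown_mul_apply_zero (Y : Matrix (Fin n) κ R) (hn : 0 < n) (c : κ) :
    (shiftDown R n * Y) ⟨0, hn⟩ c = 0 :=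
  (Matrix.mul_apply ..).trans <| Finset.sum_eq_zero fun k _ => by simp [shiftDown]

lemma shiftDown_mul_apply_succ (Y : Matrix (Fin n) κ R) {i : ℕ} (hi : i + 1 < n) (c : κ) :
    (shiftDown R n * Y) ⟨i + 1, hi⟩ c = Y ⟨i, by omega⟩ c := by
  rw [Matrix.mul_apply, Fintype.sum_eq_single ⟨i, by omega⟩]
  · simp [shiftDown]
  · intro k hk
    simp only [shiftDown, Matrix.of_apply, add_left_inj]
    rw [if_neg fun h => hk (Fin.ext h.symm), zero_mul]

lemma apply_eq_zero_of_eq_shiftDown_mul_mul [Fintype κ] {T : Matrix (Fin n) κ R}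
    {M : Matrix κ κ R} (s : Set κ) (hM : ∀ k c, k ∉ s → c ∈ s → M k c = 0)
    (hT : ∀ i, ∀ c ∈ s, T i c = (shiftDown R n * T * M) i c) :
    ∀ i, ∀ c ∈ s, T i c = 0 := by
  rintro ⟨i, hi⟩
  induction i with
  | zero =>
    intro c hc
    rw [hT _ c hc, Matrix.mul_apply]
    exact Finset.sum_eq_zero fun k _ => by rw [shiftDown_mul_apply_zero, zero_mul]
  | succ i ih =>
    intro c hc
    rw [hT _ c hc, Matrix.mul_apply]
    refine Finset.sum_eq_zero fun k _ => ?_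
    rw [shiftDown_mul_apply_succ]
    by_cases hk : k ∈ s
    · rw [ih (by omega) k hk, zero_mul]
    · rw [hM k c hk hc, mul_zero]

lemma exists_sub_shiftDown_mul_mul_eq [Fintype κ] {K : Type*} [Field K] (M : Matrix κ κ K)
    (Z : Matrix (Fin n) κ K) : ∃ T : Matrix (Fin n) κ K, T - shiftDown K n * T * M = Z := by
  let f : Matrix (Fin n) κ K →ₗ[K] Matrix (Fin n) κ K :=
    { toFun := fun T => T - shiftDown K n * T * M
      map_add' := fun T T' => by simp only [Matrix.mul_add, Matrix.add_mul]; abel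
      map_smul' := fun a T => by simp [smul_sub] }
  have hf : Function.Injective f := by
    refine (injective_iff_map_eq_zero f).mpr fun T hT => ?_
    have hfix : ∀ i, ∀ c ∈ Set.univ, T i c = (shiftDown K n * T * M) i c := fun i c _ =>
      congrFun (congrFun (sub_eq_zero.mp hT) i) c
    ext i c
    exact apply_eq_zero_of_eq_shiftDown_mul_mul Set.univ (by simp) hfix i c trivial
  exact LinearMap.injective_iff_surjective.mp hf Z

end shiftDown

lemma delM_mul_delM (n : ℕ) : delM n * delM n = 1 := by
  ext i k
  have := i.isLt
  have := k.isLt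
  rw [Matrix.mul_apply, Fintype.sum_eq_single ⟨n - 1 - i, by omega⟩, Matrix.one_apply]
  · simp only [delM, Matrix.of_apply, Fin.ext_iff]
    split_ifs <;> first | omega | simp
  · intro j hj
    simp only [delM, Matrix.of_apply, Ne, Fin.ext_iff] at hj ⊢
    split_ifs <;> first | omega | simp

lemma lamM_zero_mul_delM (n : ℕ) : lamM n 0 * delM n = shiftDown ℂ n := by
  ext i k
  have := i.isLt
  have := k.isLt
  by_cases hik : (i : ℕ) = k + 1
  · rw [Matrix.mul_apply, Fintype.sum_eq_single ⟨n - i, by omega⟩]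
    · simp only [lamM, delM, shiftDown, Matrix.of_apply]
      split_ifs <;> first | omega | simp
    · intro j hj
      simp only [lamM, delM, Matrix.of_apply, Ne, Fin.ext_iff] at hj ⊢
      split_ifs <;> first | omega | simp
  · rw [Matrix.mul_apply]
    simp only [shiftDown, Matrix.of_apply, if_neg hik]
    refine Finset.sum_eq_zero fun j _ => ?_
    simp only [lamM, delM, Matrix.of_apply]
    split_ifs <;> first | omega | simp

section L

variable {ι : Type*} {m : ℕ}

lemma L1M_apply (k c : Fin (2 * m + 1)) :
    L1M m k c = if (k : ℕ) + (m + 1) = c ∨ (c : ℕ) + (m + 1) = k then 1 else 0 := by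
  obtain ⟨k', rfl⟩ :=
    (finSumFinEquiv.trans (finCongr (by omega : m + 1 + m = 2 * m + 1))).surjective k
  obtain ⟨c', rfl⟩ :=
    (finSumFinEquiv.trans (finCongr (by omega : m + 1 + m = 2 * m + 1))).surjective c
  simp only [L1M, Matrix.reindex_apply, Matrix.submatrix_apply, Equiv.symm_apply_apply]
  rcases k' with a | a <;> rcases c' with b | b <;>
    simp only [Matrix.fromBlocks_apply₁₁, Matrix.fromBlocks_apply₁₂, Matrix.fromBlocks_apply₂₁,
      Matrix.fromBlocks_apply₂₂, Matrix.zero_apply, Matrix.transpose_apply, FM, Matrix.of_apply,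
      Equiv.trans_apply, finCongr_apply, Fin.val_cast, finSumFinEquiv_apply_left,
      finSumFinEquiv_apply_right, Fin.val_castAdd, Fin.val_natAdd] <;>
    split_ifs <;> first | rfl | omega

lemma L2M_apply (k c : Fin (2 * m + 1)) :
    L2M m k c =
      if ((k : ℕ) + m = c ∧ 1 ≤ (k : ℕ)) ∨ ((c : ℕ) + m = k ∧ 1 ≤ (c : ℕ)) then 1 else 0 := by
  obtain ⟨k', rfl⟩ :=
    (finSumFinEquiv.trans (finCongr (by omega : m + 1 + m = 2 * m + 1))).surjective k
  obtain ⟨c', rfl⟩ :=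
    (finSumFinEquiv.trans (finCongr (by omega : m + 1 + m = 2 * m + 1))).surjective c
  simp only [L2M, Matrix.reindex_apply, Matrix.submatrix_apply, Equiv.symm_apply_apply]
  rcases k' with a | a <;> rcases c' with b | b <;>
    simp only [Matrix.fromBlocks_apply₁₁, Matrix.fromBlocks_apply₁₂, Matrix.fromBlocks_apply₂₁,
      Matrix.fromBlocks_apply₂₂, Matrix.zero_apply, Matrix.transpose_apply, GM, Matrix.of_apply,
      Equiv.trans_apply, finCongr_apply, Fin.val_cast, finSumFinEquiv_apply_left,
      finSumFinEquiv_apply_right, Fin.val_castAdd, Fin.val_natAdd] <;>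
    split_ifs <;> first | rfl | omega

lemma mul_L1M_apply (T : Matrix ι (Fin (2 * m + 1)) ℂ) (i : ι) (c : Fin (2 * m + 1)) :
    (T * L1M m) i c =
      if h : (c : ℕ) < m then T i ⟨c + (m + 1), by omega⟩
      else if h' : m < (c : ℕ) then T i ⟨c - (m + 1), by omega⟩
      else 0 := by
  have := c.isLt
  rw [Matrix.mul_apply]
  split_ifs with h h'
  · rw [Fintype.sum_eq_single ⟨c + (m + 1), by omega⟩ fun k hk => ?_]
    · rw [L1M_apply, if_pos, mul_one]
      exact Or.inr rfl
    · simp only [L1M_apply, Ne, Fin.ext_iff] at hk ⊢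
      split_ifs <;> first | omega | simp
  · rw [Fintype.sum_eq_single ⟨c - (m + 1), by omega⟩ fun k hk => ?_]
    · rw [L1M_apply, if_pos, mul_one]
      dsimp only; omega
    · simp only [L1M_apply, Ne, Fin.ext_iff] at hk ⊢
      split_ifs <;> first | omega | simp
  · refine Finset.sum_eq_zero fun k _ => ?_
    simp only [L1M_apply]
    split_ifs <;> first | omega | simp

lemma mul_L2M_apply (T : Matrix ι (Fin (2 * m + 1)) ℂ) (i : ι) (c : Fin (2 * m + 1)) :
    (T * L2M m) i c =
      if h : 1 ≤ (c : ℕ) ∧ (c : ℕ) ≤ m then T i ⟨c + m, by omega⟩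
      else if h' : m + 1 ≤ (c : ℕ) then T i ⟨c - m, by omega⟩
      else 0 := by
  have := c.isLt
  rw [Matrix.mul_apply]
  split_ifs with h h'
  · rw [Fintype.sum_eq_single ⟨c + m, by omega⟩ fun k hk => ?_]
    · rw [L2M_apply, if_pos, mul_one]
      exact Or.inr ⟨rfl, h.1⟩
    · simp only [L2M_apply, Ne, Fin.ext_iff] at hk ⊢
      split_ifs <;> first | omega | simp
  · rw [Fintype.sum_eq_single ⟨c - m, by omega⟩ fun k hk => ?_]
    · rw [L2M_apply, if_pos, mul_one]
      dsimp only; omega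
    · simp only [L2M_apply, Ne, Fin.ext_iff] at hk ⊢
      split_ifs <;> first | omega | simp
  · refine Finset.sum_eq_zero fun k _ => ?_
    simp only [L2M_apply]
    split_ifs <;> first | omega | simp

lemma mul_L1M_apply_of_eq (Z : Matrix ι (Fin (2 * m + 1)) ℂ) (i : ι) {c : Fin (2 * m + 1)}
    (hc : (c : ℕ) = m) : (Z * L1M m) i c = 0 := by
  rw [mul_L1M_apply, dif_neg (by omega), dif_neg (by omega)]

lemma mul_L1M_mul_L1M_apply_of_ne (Z : Matrix ι (Fin (2 * m + 1)) ℂ) (i : ι)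
    {c : Fin (2 * m + 1)} (hc : (c : ℕ) ≠ m) : (Z * L1M m * L1M m) i c = Z i c := by
  have := c.isLt
  rw [mul_L1M_apply]
  split_ifs with h h'
  · rw [mul_L1M_apply, dif_neg (by dsimp only; omega), dif_pos (by dsimp only; omega)]
    congr
    simp only
    omega
  · rw [mul_L1M_apply, dif_pos (by dsimp only; omega)]
    congr
    simp only
    omega
  · omega

lemma mul_L1M_eq_zero {X : Matrix ι (Fin (2 * m + 1)) ℂ}
    (hX : ∀ i (c : Fin (2 * m + 1)), (c : ℕ) ≠ m → X i c = 0) : X * L1M m = 0 := by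
  ext i c
  rw [mul_L1M_apply]
  split_ifs <;> first | rfl | exact hX _ _ (by dsimp only; omega)

lemma mul_L2M_apply_of_eq (hm : 0 < m) (Z : Matrix ι (Fin (2 * m + 1)) ℂ) (i : ι)
    {c : Fin (2 * m + 1)} (hc : (c : ℕ) = m) :
    (Z * L2M m) i c = Z i ⟨2 * m, by omega⟩ := by
  rw [mul_L2M_apply, dif_pos (by omega)]
  congr
  omega

lemma L2M_mul_L1M_apply_eq_zero {k c : Fin (2 * m + 1)} (hk : (k : ℕ) ≤ m) (hc : m < (c : ℕ)) :
    (L2M m * L1M m) k c = 0 := by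
  rw [mul_L1M_apply, dif_neg (by omega), dif_pos hc, L2M_apply, if_neg]
  simp only
  omega

end L

lemma mem_WSpace_iff {ι κ : Type} [Fintype ι] [DecidableEq ι] [Fintype κ]
    {Ai Bi : Matrix ι ι ℂ} {Aj Bj : Matrix κ κ ℂ} (hB : Bi * Bi = 1)
    {x : Matrix ι κ ℂ × Matrix ι κ ℂ} :
    x ∈ WSpace Ai Bi Aj Bj ↔
      ∃ T : Matrix ι κ ℂ, x.1 - Ai * Bi * x.2 = T * Aj - Ai * Bi * T * Bj := by
  have hBi : ∀ S : Matrix ι κ ℂ, Ai * Bi * (Bi * S) = Ai * S := fun S => by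
    rw [Matrix.mul_assoc, ← Matrix.mul_assoc Bi, hB, Matrix.one_mul]
  constructor
  · rintro ⟨⟨S, R⟩, rfl⟩
    refine ⟨Rᵀ, ?_⟩
    change Rᵀ * Aj + Ai * S - Ai * Bi * (Rᵀ * Bj + Bi * S) = _
    rw [Matrix.mul_add, hBi, ← Matrix.mul_assoc]
    abel
  · rintro ⟨T, hT⟩
    refine ⟨(Bi * (x.2 - T * Bj), Tᵀ), Prod.ext ?_ ?_⟩
    · change Tᵀᵀ * Aj + Ai * (Bi * (x.2 - T * Bj)) = x.1
      rw [Matrix.transpose_transpose, ← Matrix.mul_assoc, Matrix.mul_sub, ← Matrix.mul_assoc,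
        sub_eq_iff_eq_add'.mp hT]
      abel
    · change Tᵀᵀ * Bj + Bi * (Bi * (x.2 - T * Bj)) = x.2
      rw [Matrix.transpose_transpose, ← Matrix.mul_assoc, hB, Matrix.one_mul, add_sub_cancel]

lemma mem_WSpace_lamM_zero_delM_iff {n : ℕ} {κ : Type} [Fintype κ] {Aj Bj : Matrix κ κ ℂ}
    {x : Matrix (Fin n) κ ℂ × Matrix (Fin n) κ ℂ} :
    x ∈ WSpace (lamM n 0) (delM n) Aj Bj ↔
      ∃ T : Matrix (Fin n) κ ℂ, x.1 - shiftDown ℂ n * x.2 = T * Aj - shiftDown ℂ n * T * Bj := by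
  rw [mem_WSpace_iff (delM_mul_delM n), lamM_zero_mul_delM]

lemma mem_entryPattern_empty_iff {ι κ : Type} {S : Set (ι × κ)}
    {x : Matrix ι κ ℂ × Matrix ι κ ℂ} :
    x ∈ entryPattern S ∅ ↔ (∀ i j, (i, j) ∉ S → x.1 i j = 0) ∧ x.2 = 0 :=
  and_congr_right' ⟨fun h => Matrix.ext fun i j => h i j (Set.notMem_empty _),
    fun h i j _ => by rw [h]; rfl⟩

section KL

variable {n m : ℕ}

lemma mul_L1M_sub_shiftDown_mul_mul_L2M_eq_zero (hm : 0 < m)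
    {T : Matrix (Fin n) (Fin (2 * m + 1)) ℂ}
    (h : ∀ i (c : Fin (2 * m + 1)), (c : ℕ) ≠ m →
      (T * L1M m - shiftDown ℂ n * T * L2M m) i c = 0) :
    T * L1M m - shiftDown ℂ n * T * L2M m = 0 := by
  have hTL : T * L1M m * L1M m = (T * L1M m - shiftDown ℂ n * T * L2M m) * L1M m +
      shiftDown ℂ n * T * (L2M m * L1M m) := by
    rw [Matrix.sub_mul, ← Matrix.mul_assoc, sub_add_cancel]
  have hfix : ∀ i, ∀ c ∈ {c : Fin (2 * m + 1) | m < c},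
      T i c = (shiftDown ℂ n * T * (L2M m * L1M m)) i c := by
    intro i c hc
    rw [← mul_L1M_mul_L1M_apply_of_ne T i (ne_of_gt hc), hTL, mul_L1M_eq_zero h,
      zero_add]
  have hupper : ∀ i, ∀ c ∈ {c : Fin (2 * m + 1) | m < c}, T i c = 0 :=
    apply_eq_zero_of_eq_shiftDown_mul_mul _
      (fun k c hk hc => L2M_mul_L1M_apply_eq_zero (not_lt.mp hk) hc) hfix
  ext i c
  by_cases hc : (c : ℕ) = m
  · rw [Matrix.sub_apply, mul_L1M_apply_of_eq T i hc, Matrix.mul_assoc, Matrix.mul_apply,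
      Finset.sum_eq_zero fun k _ => ?_, sub_zero, Matrix.zero_apply]
    rw [mul_L2M_apply_of_eq hm T k hc, hupper k _ (show m < 2 * m by omega),
      mul_zero]
  · exact h i c hc

lemma exists_mul_L1M_sub_shiftDown_mul_mul_L2M_eq_of_ne
    (Z : Matrix (Fin n) (Fin (2 * m + 1)) ℂ) :
    ∃ T : Matrix (Fin n) (Fin (2 * m + 1)) ℂ, ∀ i (c : Fin (2 * m + 1)), (c : ℕ) ≠ m →
      (T * L1M m - shiftDown ℂ n * T * L2M m) i c = Z i c := by
  obtain ⟨T, hT⟩ := exists_sub_shiftDown_mul_mul_eq (L2M m * L1M m) (Z * L1M m)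
  refine ⟨T, fun i c hc => ?_⟩
  have h := congrArg (fun M => (M * L1M m) i c) hT
  simp only [Matrix.sub_mul, Matrix.sub_apply, ← Matrix.mul_assoc] at h
  rwa [mul_L1M_mul_L1M_apply_of_ne _ _ hc, mul_L1M_mul_L1M_apply_of_ne _ _ hc,
    ← Matrix.sub_apply] at h

end KL

theorem K_L_offdiagonal_general (n m : ℕ) (hm : 0 < m) :
    Disjoint (WSpace (lamM n 0) (delM n) (L1M m) (L2M m))
      (entryPattern
        {pq : Fin n × Fin (2 * m + 1) | (pq.2 : ℕ) = m}
        (∅ : Set (Fin n × Fin (2 * m + 1)))) ∧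
    WSpace (lamM n 0) (delM n) (L1M m) (L2M m) ⊔
      entryPattern
        {pq : Fin n × Fin (2 * m + 1) | (pq.2 : ℕ) = m}
        (∅ : Set (Fin n × Fin (2 * m + 1))) = ⊤ := by
  constructor
  · rw [Submodule.disjoint_def]
    rintro ⟨X, Y⟩ hxW hxP
    obtain ⟨hX, rfl : Y = 0⟩ := mem_entryPattern_empty_iff.mp hxP
    obtain ⟨T, hXT⟩ := mem_WSpace_lamM_zero_delM_iff.mp hxW
    rw [Matrix.mul_zero, sub_zero] at hXT
    refine Prod.ext ?_ rfl
    rw [hXT] at hX ⊢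
    exact mul_L1M_sub_shiftDown_mul_mul_L2M_eq_zero hm hX
  · rw [eq_top_iff]
    rintro ⟨X, Y⟩ -
    obtain ⟨T, hT⟩ := exists_mul_L1M_sub_shiftDown_mul_mul_L2M_eq_of_ne (X - shiftDown ℂ n * Y)
    set w := shiftDown ℂ n * Y + (T * L1M m - shiftDown ℂ n * T * L2M m)
    refine Submodule.mem_sup.mpr ⟨(w, Y),
      mem_WSpace_lamM_zero_delM_iff.mpr ⟨T, add_sub_cancel_left _ _⟩, (X - w, 0),
      mem_entryPattern_empty_iff.mpr ⟨fun i c hc => ?_, rfl⟩, by simp⟩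
    have h := hT i c hc
    simp only [w, Matrix.sub_apply, Matrix.add_apply] at h ⊢
    linear_combination -h

/-- **Off-diagonal blocks `K_n` vs `L_m`.** With
`W = {(Rᵀ L_m^{(1)} + Λ_n(0) S, Rᵀ L_m^{(2)} + Δ_n S)}` and `P` the pairs `(X, 0)` with
`X` supported on the `(m+1)`-st column, one has
`ℂ^{n×(2m+1)} × ℂ^{n×(2m+1)} = W ⊕ P`. -/
theorem K_L_offdiagonal (n m : ℕ) (hn : 0 < n) (hm : 0 < m) :
    Disjoint (WSpace (lamM n 0) (delM n) (L1M m) (L2M m))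
      (entryPattern
        {pq : Fin n × Fin (2 * m + 1) | (pq.2 : ℕ) = m}
        (∅ : Set (Fin n × Fin (2 * m + 1)))) ∧
    WSpace (lamM n 0) (delM n) (L1M m) (L2M m) ⊔
      entryPattern
        {pq : Fin n × Fin (2 * m + 1) | (pq.2 : ℕ) = m}
        (∅ : Set (Fin n × Fin (2 * m + 1))) = ⊤ :=
  K_L_offdiagonal_general n m hm
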